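/- arXiv:2110.13405 — 3 statements merged into one kernel-verified Lean document; each statement's English description precedes it below -/
import Mathlib

section
/- The largest positive integer not belonging to G is exactly (n−1)·P − Σ_{i=1}^n P/a_i. That is: the integer F = (n−1)·P − Σ_{i=1}^n P/a_i is positive, F ∉ G, and every integer x > F belongs to G. -/
/-!
The generators are the cofactors `b i = ∏_{j ≠ i} a j`. Modulo `a i` every cofactor other than
`b i` vanishes and `b i` is a unit, so (Chinese remainder theorem) every integer is congruent
modulo `P` to some `∑ c i * b i` with `0 ≤ c i < a i`. The largest such sum is
`∑ (a i - 1) * b i = F + P`, so every `x > F` is such a sum plus a nonnegative multiple of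
`P = a i * b i`. On the other hand `F + ∑ b i = (n - 1) * P`, so a representation
`F = ∑ c i * b i` would force `a i ∣ c i + 1` for all `i`, whence
`(n - 1) * P ≥ ∑ a i * b i = n * P`.
Finally `F > 0` amounts to `∑ 1 / a i < n - 1`, true because at most one `a i` equals `2`.
-/

open Finset Function

section Cofactor

variable {ι : Type*} [Fintype ι] [DecidableEq ι] {a : ι → ℤ}

def cofactor (a : ι → ℤ) (i : ι) : ℤ := ∏ j ∈ univ.erase i, a j

lemma mul_cofactor (a : ι → ℤ) (i : ι) : a i * cofactor a i = ∏ j, a j :=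
  mul_prod_erase _ _ (mem_univ i)

lemma prod_ediv_eq_cofactor {i : ι} (hi : a i ≠ 0) : (∏ j, a j) / a i = cofactor a i := by
  rw [← mul_cofactor, Int.mul_ediv_cancel_left _ hi]

lemma dvd_cofactor {i j : ι} (hij : i ≠ j) : a i ∣ cofactor a j :=
  dvd_prod_of_mem _ (mem_erase.2 ⟨hij, mem_univ i⟩)

lemma cofactor_pos (ha : ∀ i, 0 < a i) (i : ι) : 0 < cofactor a i :=
  prod_pos fun j _ => ha j

lemma isCoprime_cofactor (hcop : Pairwise (IsCoprime on a)) (i : ι) :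
    IsCoprime (a i) (cofactor a i) :=
  IsCoprime.prod_right fun _ hj => hcop (ne_of_mem_erase hj).symm

lemma sum_mul_cofactor_modEq (c : ι → ℤ) (i : ι) :
    ∑ j, c j * cofactor a j ≡ c i * cofactor a i [ZMOD a i] := by
  rw [← add_sum_erase _ _ (mem_univ i)]
  refine (Int.modEq_iff_dvd.2 ?_).symm
  rw [add_sub_cancel_left]
  exact dvd_sum fun j hj => (dvd_cofactor (ne_of_mem_erase hj).symm).mul_left (c j)

lemma exists_sum_mul_cofactor_modEq (ha : ∀ i, 0 < a i) (hcop : Pairwise (IsCoprime on a))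
    (x : ℤ) : ∃ c : ι → ℤ, (∀ i, 0 ≤ c i ∧ c i < a i) ∧
      ∑ i, c i * cofactor a i ≡ x [ZMOD ∏ i, a i] := by
  choose u v huv using isCoprime_cofactor hcop
  refine ⟨fun i => x * v i % a i,
    fun i => ⟨Int.emod_nonneg _ (ha i).ne', Int.emod_lt_of_pos _ (ha i)⟩,
    Int.modEq_iff_dvd.2 (Fintype.prod_dvd_of_coprime hcop fun i => Int.modEq_iff_dvd.1 ?_)⟩
  calc ∑ j, x * v j % a j * cofactor a j
      ≡ x * v i % a i * cofactor a i [ZMOD a i] := sum_mul_cofactor_modEq _ i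
    _ ≡ x * v i * cofactor a i [ZMOD a i] := (Int.mod_modEq _ _).mul_right _
    _ = x - x * u i * a i := by linear_combination x * huv i
    _ ≡ x [ZMOD a i] := Int.modEq_iff_dvd.2 ⟨x * u i, by ring⟩

lemma card_mul_prod_le_sum_mul_cofactor (ha : ∀ i, 0 < a i) (hcop : Pairwise (IsCoprime on a))
    {d : ι → ℤ} (hd : ∀ i, 0 < d i) (hdvd : (∏ j, a j) ∣ ∑ j, d j * cofactor a j) :
    Fintype.card ι * ∏ j, a j ≤ ∑ j, d j * cofactor a j := by
  have hle : ∀ i, a i ≤ d i := fun i =>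
    Int.le_of_dvd (hd i) <| (isCoprime_cofactor hcop i).dvd_of_dvd_mul_right <|
      (sum_mul_cofactor_modEq d i).dvd_iff.1 ((dvd_prod_of_mem a (mem_univ i)).trans hdvd)
  calc (Fintype.card ι : ℤ) * ∏ j, a j = ∑ j, a j * cofactor a j := by simp [mul_cofactor]
    _ ≤ ∑ j, d j * cofactor a j :=
      sum_le_sum fun j _ => mul_le_mul_of_nonneg_right (hle j) (cofactor_pos ha j).le

lemma sum_cofactor_lt [Nontrivial ι] (ha : ∀ i, 2 ≤ a i) (hcop : Pairwise (IsCoprime on a)) :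
    ∑ i, cofactor a i < (Fintype.card ι - 1) * ∏ i, a i := by
  have ha₀ : ∀ i, 0 < a i := fun i => by linarith [ha i]
  obtain ⟨i, hi⟩ : ∃ i, 3 ≤ a i := by
    obtain ⟨i, j, hij⟩ := exists_pair_ne ι
    by_contra! h
    have h22 : IsCoprime (a i) (a j) := hcop hij
    rw [show a i = 2 by linarith [ha i, h i], show a j = 2 by linarith [ha j, h j],
      Int.isCoprime_iff_gcd_eq_one] at h22
    exact absurd h22 (by decide)
  have hsum : 2 * ∑ i, cofactor a i < Fintype.card ι * ∏ i, a i := by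
    rw [mul_sum]
    calc ∑ j, 2 * cofactor a j < ∑ _j : ι, ∏ i, a i :=
          sum_lt_sum (fun j _ => by nlinarith [ha j, cofactor_pos ha₀ j, mul_cofactor a j])
            ⟨i, mem_univ i, by nlinarith [cofactor_pos ha₀ i, mul_cofactor a i]⟩
      _ = Fintype.card ι * ∏ i, a i := by simp
  have hcard : (2 : ℤ) ≤ Fintype.card ι := by exact_mod_cast Fintype.one_lt_card
  nlinarith [prod_pos fun i (_ : i ∈ univ) => ha₀ i]

lemma sum_natCast_mul_cofactor_ne (ha : ∀ i, 0 < a i) (hcop : Pairwise (IsCoprime on a))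
    (c : ι → ℕ) :
    ∑ i, (c i : ℤ) * cofactor a i ≠
      (Fintype.card ι - 1) * ∏ i, a i - ∑ i, cofactor a i := by
  intro hc
  have hsum : ∑ i, ((c i : ℤ) + 1) * cofactor a i = (Fintype.card ι - 1) * ∏ i, a i := by
    simp only [add_mul, one_mul, sum_add_distrib, hc, sub_add_cancel]
  have hle := card_mul_prod_le_sum_mul_cofactor ha hcop (d := fun i => (c i : ℤ) + 1)
    (fun i => by positivity) (hsum ▸ dvd_mul_left _ _)
  rw [hsum] at hle
  linarith [prod_pos fun i (_ : i ∈ univ) => ha i]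

lemma exists_eq_sum_natCast_mul_cofactor [Nonempty ι] (ha : ∀ i, 0 < a i)
    (hcop : Pairwise (IsCoprime on a)) {x : ℤ}
    (hx : (Fintype.card ι - 1) * ∏ i, a i - ∑ i, cofactor a i < x) :
    ∃ c : ι → ℕ, x = ∑ i, (c i : ℤ) * cofactor a i := by
  obtain ⟨c, hc, hcx⟩ := exists_sum_mul_cofactor_modEq ha hcop x
  obtain ⟨k, hxk⟩ := Int.modEq_iff_dvd.1 hcx
  have hP : 0 < ∏ i, a i := prod_pos fun i _ => ha i
  have hmax : ∑ i, c i * cofactor a i ≤ Fintype.card ι * ∏ i, a i - ∑ i, cofactor a i :=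
    calc ∑ i, c i * cofactor a i ≤ ∑ i, (a i - 1) * cofactor a i :=
          sum_le_sum fun i _ =>
            mul_le_mul_of_nonneg_right (by linarith [hc i]) (cofactor_pos ha i).le
      _ = Fintype.card ι * ∏ i, a i - ∑ i, cofactor a i := by
          simp [sub_mul, sum_sub_distrib, mul_cofactor]
  have hk : 0 ≤ k := by
    have : 0 < (∏ i, a i) * (k + 1) := by linarith
    linarith [pos_of_mul_pos_right this hP.le]
  obtain ⟨i₀⟩ := ‹Nonempty ι›
  let d : ι → ℤ := c + Pi.single i₀ (k * a i₀)
  have hd : 0 ≤ d :=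
    add_nonneg (fun i => (hc i).1) (Pi.single_nonneg.2 (mul_nonneg hk (ha i₀).le))
  refine ⟨fun i => (d i).toNat, ?_⟩
  simp only [fun i => Int.toNat_of_nonneg (hd i)]
  simp only [d, Pi.add_apply, add_mul, sum_add_distrib,
    Pi.single_apply, ite_mul, zero_mul, sum_ite_eq', mem_univ, if_true, mul_assoc, mul_cofactor]
  linarith

end Cofactor

/-- For `n ≥ 2` and pairwise relatively prime `a_1, …, a_n ≥ 2` with
`P = a_1⋯a_n`, the largest positive integer not in the numerical semigroup `G`
generated by the `P/a_i` is `F = (n−1)·P − Σ_{i=1}^n P/a_i`: that is, `F > 0`,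
`F ∉ G`, and every integer `x > F` belongs to `G`. -/
theorem stmt_8 (n : ℕ) (hn : 2 ≤ n) (a : Fin n → ℤ)
    (ha : ∀ i, 2 ≤ a i)
    (hcop : ∀ i j, i ≠ j → IsCoprime (a i) (a j))
    (P : ℤ) (hP : P = ∏ i, a i)
    (F : ℤ) (hF : F = ((n : ℤ) - 1) * P - ∑ i, P / a i) :
    0 < F ∧
    (¬ ∃ c : Fin n → ℕ, F = ∑ i, (c i : ℤ) * (P / a i)) ∧
    (∀ x : ℤ, F < x → ∃ c : Fin n → ℕ, x = ∑ i, (c i : ℤ) * (P / a i)) := by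
  have ha₀ : ∀ i, 0 < a i := fun i => by linarith [ha i]
  have hcop' : Pairwise (IsCoprime on a) := fun i j => hcop i j
  have : Nontrivial (Fin n) := Fin.nontrivial_iff_two_le.2 hn
  have : Nonempty (Fin n) := ⟨⟨0, by omega⟩⟩
  have hb : ∀ i, P / a i = cofactor a i := fun i => hP ▸ prod_ediv_eq_cofactor (ha₀ i).ne'
  have hpos := sum_cofactor_lt ha hcop'
  have hgap := sum_natCast_mul_cofactor_ne ha₀ hcop'
  have hrepr := fun x : ℤ => exists_eq_sum_natCast_mul_cofactor (x := x) ha₀ hcop'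
  simp only [Fintype.card_fin] at hpos hgap hrepr
  simp only [hb] at hF ⊢
  subst hF hP
  exact ⟨sub_pos.2 hpos, fun ⟨c, hc⟩ => hgap c hc.symm, fun x hx => hrepr x hx⟩
end

section
/- One has χ(0) = −t; that is, Δ(−α) + Δ(−α+1) + ⋯ + Δ(−1) = −t. -/
/-!
Substituting `x = -k` turns every ceiling of `Δ` into a floor, so the sum is
`∑_{k=0}^{α} (1 + e₀ k + ∑ᵢ ⌊k bᵢ / aᵢ⌋ + ⌊k bₙ / aₙ⌋)` minus the term `k = 0`. Each floor sum
is evaluated by pairing `k` with `α - k`. For `i < n`, `aᵢ ∣ α` and the defining equation makes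
`bᵢ` prime to `aᵢ`, so a pair contributes `α bᵢ / aᵢ - 1`, except at the `α / aᵢ + 1` multiples
of `aᵢ`, where it contributes `α bᵢ / aᵢ`. For `i = n` the defining equation reads
`α bₙ + 1 = aₙ (-e₀ α - ∑ᵢ bᵢ α / aᵢ)`, so every pair contributes `(α bₙ + 1) / aₙ - 1`.
Adding everything up gives `-2t`.
-/

open Finset

namespace Int

lemma ediv_add_neg_one_sub_ediv (x : ℤ) {m : ℤ} (hm : 0 < m) : x / m + (-1 - x) / m = -1 := by
  have hr := emod_nonneg x hm.ne'
  have hr' := emod_lt_of_pos x hm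
  have hx := mul_ediv_add_emod x m
  have : (-1 - x) / m = -(x / m) - 1 := by
    rw [ediv_eq_iff_of_pos hm]; constructor <;> nlinarith
  omega

lemma ediv_add_neg_ediv (x : ℤ) {m : ℤ} (hm : 0 < m) :
    x / m + (-x) / m = -if m ∣ x then 0 else 1 := by
  rw [neg_ediv, sign_eq_one_of_pos hm]; ring

lemma card_filter_dvd_Icc_zero {m A : ℤ} (hm : 0 < m) (hA : 0 ≤ A) :
    #{k ∈ Icc 0 A | m ∣ k} = A / m + 1 := by
  have : {k ∈ Icc 0 A | m ∣ k} = (Icc 0 (A / m)).image (m * ·) := by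
    ext k
    simp only [mem_filter, mem_Icc, mem_image]
    constructor
    · rintro ⟨⟨hk0, hkA⟩, y, rfl⟩
      refine ⟨y, ⟨nonneg_of_mul_nonneg_right hk0 hm, ?_⟩, rfl⟩
      exact (Int.le_ediv_iff_mul_le hm).2 (by linarith)
    · rintro ⟨y, ⟨hy0, hyA⟩, rfl⟩
      have := (Int.le_ediv_iff_mul_le hm).1 hyA
      exact ⟨⟨by positivity, by linarith⟩, dvd_mul_right m y⟩
  rw [this, card_image_of_injective _ (mul_right_injective₀ hm.ne'), card_Icc]
  have := ediv_nonneg hA hm.le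
  omega

end Int

lemma sum_Icc_zero_reflect {M : Type*} [AddCommMonoid M] (f : ℤ → M) (A : ℤ) :
    ∑ k ∈ Icc 0 A, f (A - k) = ∑ k ∈ Icc 0 A, f k :=
  sum_nbij' (A - ·) (A - ·) (by simp only [mem_Icc]; omega) (by simp only [mem_Icc]; omega)
    (by simp) (by simp) (by simp)

lemma two_mul_sum_Icc_zero_eq_sum_add_reflect {R : Type*} [NonAssocSemiring R] (f : ℤ → R)
    (A : ℤ) :
    2 * ∑ k ∈ Icc 0 A, f k = ∑ k ∈ Icc 0 A, (f k + f (A - k)) := by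
  rw [sum_add_distrib, sum_Icc_zero_reflect, two_mul]

lemma two_mul_sum_Icc_zero_id {A : ℤ} (hA : 0 ≤ A) : 2 * ∑ k ∈ Icc 0 A, k = A * (A + 1) := by
  rw [two_mul_sum_Icc_zero_eq_sum_add_reflect]
  simp only [add_sub_cancel, sum_const, Int.card_Icc, nsmul_eq_mul, sub_zero]
  rw [Int.toNat_of_nonneg (by omega)]; ring

lemma two_mul_sum_Icc_ediv_of_dvd_mul_add_one {m b A : ℤ} (hm : 0 < m) (hA : 0 ≤ A)
    (h : m ∣ A * b + 1) :
    2 * ∑ k ∈ Icc 0 A, k * b / m = (A + 1) * ((A * b + 1) / m - 1) := by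
  rw [two_mul_sum_Icc_zero_eq_sum_add_reflect]
  have hk (k : ℤ) : k * b / m + (A - k) * b / m = (A * b + 1) / m - 1 := by
    rw [show (A - k) * b = (A * b + 1) + (-1 - k * b) by ring, Int.add_ediv_of_dvd_left h]
    linarith [Int.ediv_add_neg_one_sub_ediv (k * b) hm]
  simp only [hk, sum_const, Int.card_Icc, nsmul_eq_mul, sub_zero]
  rw [Int.toNat_of_nonneg (by omega)]

lemma two_mul_sum_Icc_ediv_of_dvd {m b A : ℤ} (hm : 0 < m) (hA : 0 ≤ A) (hcop : IsCoprime m b)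
    (h : m ∣ A) :
    2 * ∑ k ∈ Icc 0 A, k * b / m = (A + 1) * (A * b / m) - A + A / m := by
  rw [two_mul_sum_Icc_zero_eq_sum_add_reflect]
  have hk (k : ℤ) : k * b / m + (A - k) * b / m = A * b / m - 1 + if m ∣ k then 1 else 0 := by
    rw [show (A - k) * b = A * b + -(k * b) by ring,
      Int.add_ediv_of_dvd_left (h.mul_right b)]
    have hdvd : m ∣ k * b ↔ m ∣ k := ⟨hcop.dvd_of_dvd_mul_right, (·.mul_right b)⟩
    have := Int.ediv_add_neg_ediv (k * b) hm
    simp only [hdvd] at this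
    split_ifs at this ⊢ <;> linarith
  simp only [hk, sum_add_distrib, sum_boole, sum_const, Int.card_Icc, nsmul_eq_mul, sub_zero,
    Int.card_filter_dvd_Icc_zero hm hA]
  rw [Int.toNat_of_nonneg (by omega)]; ring

lemma ceil_neg_mul_div (k b : ℤ) {m : ℤ} (hm : 0 < m) :
    ⌈(((-k : ℤ) : ℚ) * b) / m⌉ = -(k * b / m) := by
  lift m to ℕ using hm.le
  rw [show ((-k : ℤ) : ℚ) * b = ((-k * b : ℤ) : ℚ) by push_cast; ring, Int.cast_natCast,
    Rat.ceil_intCast_div_natCast, neg_mul, neg_neg]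

lemma sum_Ico_neg_add_eq_sum_Icc {M : Type*} [AddCommMonoid M] (f : ℤ → M) {A : ℤ} (hA : 0 ≤ A) :
    ∑ j ∈ Ico (-A) 0, f j + f 0 = ∑ k ∈ Icc 0 A, f (-k) := by
  rw [← add_sum_Ioc_eq_sum_Icc hA, neg_zero, add_comm]
  congr 1
  exact sum_nbij' (- ·) (- ·) (by simp only [mem_Ico, mem_Ioc]; omega)
    (by simp only [mem_Ico, mem_Ioc]; omega) (by simp) (by simp) (by simp)

lemma two_mul_sum_sum_Icc_ediv_of_dvd {ι : Type*} [Fintype ι] {a b : ι → ℤ} {A : ℤ}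
    (ha : ∀ i, 0 < a i) (hA : 0 ≤ A) (hcop : ∀ i, IsCoprime (a i) (b i)) (hdvd : ∀ i, a i ∣ A) :
    2 * ∑ i, ∑ k ∈ Icc 0 A, k * b i / a i =
      (A + 1) * ∑ i, b i * (A / a i) - Fintype.card ι * A + ∑ i, A / a i := by
  have hAb : ∀ i, A * b i / a i = b i * (A / a i) := fun i => by
    rw [Int.mul_ediv_assoc' _ (hdvd i), mul_comm]
  simp only [mul_sum, two_mul_sum_Icc_ediv_of_dvd (ha _) hA (hcop _) (hdvd _), hAb,
    sum_add_distrib, sum_sub_distrib, sum_const, card_univ, nsmul_eq_mul]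

section ProdEdiv

variable {ι : Type*} [Fintype ι] [DecidableEq ι] {a : ι → ℤ}

lemma prod_ediv_eq_prod_erase {i : ι} (hi : a i ≠ 0) :
    (∏ j, a j) / a i = ∏ j ∈ univ.erase i, a j := by
  rw [← mul_prod_erase univ a (mem_univ i), Int.mul_ediv_cancel_left _ hi]

lemma dvd_prod_ediv_of_ne {i j : ι} (hj : a j ≠ 0) (hij : i ≠ j) : a i ∣ (∏ l, a l) / a j := by
  rw [prod_ediv_eq_prod_erase hj]
  exact dvd_prod_of_mem a (mem_erase.2 ⟨hij, mem_univ i⟩)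

lemma isCoprime_of_mul_add_sum_eq_neg_one {b : ι → ℤ} {α an bn e0 : ℤ} (ha : ∀ j, a j ≠ 0)
    (hα : α = ∏ j, a j) (heq : e0 * (α * an) + ∑ j, b j * (α / a j * an) + bn * α = -1)
    (i : ι) : IsCoprime (a i) (b i) := by
  have hdvd : a i ∣ α := hα ▸ dvd_prod_of_mem a (mem_univ i)
  have hrest : a i ∣ ∑ j ∈ univ.erase i, b j * (α / a j * an) := dvd_sum fun j hj =>
    ((hα ▸ dvd_prod_ediv_of_ne (ha j) (ne_of_mem_erase hj).symm).mul_right an).mul_left (b j)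
  rw [← add_sum_erase _ _ (mem_univ i)] at heq
  obtain ⟨c, hc⟩ : a i ∣ -(e0 * (α * an) + ∑ j ∈ univ.erase i, b j * (α / a j * an) + bn * α) :=
    (dvd_add (dvd_add ((hdvd.mul_right an).mul_left e0) hrest) (hdvd.mul_left bn)).neg_right
  exact ⟨c, -(α / a i * an), by linarith⟩

end ProdEdiv

lemma mul_add_one_eq_of_mul_add_sum_eq_neg_one {ι : Type*} [Fintype ι] {a b : ι → ℤ}
    {α an bn e0 : ℤ} (heq : e0 * (α * an) + ∑ j, b j * (α / a j * an) + bn * α = -1) :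
    α * bn + 1 = an * (-e0 * α - ∑ j, b j * (α / a j)) := by
  have hsum : ∑ j, b j * (α / a j * an) = an * ∑ j, b j * (α / a j) := by
    rw [mul_sum]; exact sum_congr rfl fun j _ => by ring
  linear_combination heq - hsum

lemma neg_of_mul_add_sum_eq_neg_one {ι : Type*} [Fintype ι] {a b : ι → ℤ} {α an bn e0 : ℤ}
    (hα : 0 < α) (han : 0 < an) (ha : ∀ j, 0 ≤ a j) (hb : ∀ j, 0 ≤ b j) (hbn : 0 ≤ bn)
    (heq : e0 * (α * an) + ∑ j, b j * (α / a j * an) + bn * α = -1) : e0 < 0 := by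
  have : 0 ≤ ∑ j, b j * (α / a j * an) := sum_nonneg fun j _ =>
    mul_nonneg (hb j) (mul_nonneg (Int.ediv_nonneg hα.le (ha j)) han.le)
  nlinarith [mul_pos hα han, mul_nonneg hbn hα.le]

theorem stmt_12_general (n : ℕ) (hn : 3 ≤ n) (a : Fin (n - 1) → ℤ) (an : ℤ)
    (ha : ∀ i, 2 ≤ a i) (han : 2 ≤ an)
    (α P : ℤ) (hα : α = ∏ i, a i) (hP : P = α * an)
    (e0 : ℤ) (b : Fin (n - 1) → ℤ) (bn : ℤ)
    (hb : ∀ i, 1 ≤ b i ∧ b i < a i) (hbn : 1 ≤ bn ∧ bn < an)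
    (heq : e0 * P + (∑ i, b i * (P / a i)) + bn * α = -1)
    (Δ : ℤ → ℤ)
    (hΔ : ∀ x : ℤ, Δ x = 1 + |e0| * x -
      ((∑ i, ⌈(x * b i : ℚ) / (a i : ℚ)⌉) + ⌈(x * bn : ℚ) / (an : ℚ)⌉))
    (t : ℤ) (ht : 2 * t = ((n : ℤ) - 2) * α - (∑ i, α / a i) + 1) :
    ∑ j ∈ Finset.Ico (-α) (0 : ℤ), Δ j = -t := by
  have ha0 : ∀ i, 0 < a i := fun i => by linarith [ha i]
  have han0 : 0 < an := by linarith
  have hα0 : 0 < α := hα ▸ prod_pos fun i _ => ha0 i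
  have hdvd : ∀ i, a i ∣ α := fun i => hα ▸ dvd_prod_of_mem a (mem_univ i)
  have hPa : ∀ i, P / a i = α / a i * an := fun i => hP ▸ Int.mul_ediv_assoc' an (hdvd i)
  simp only [hPa] at heq
  rw [hP] at heq
  have hcop := isCoprime_of_mul_add_sum_eq_neg_one (fun i => (ha0 i).ne') hα heq
  have hW := mul_add_one_eq_of_mul_add_sum_eq_neg_one heq
  have he0 := neg_of_mul_add_sum_eq_neg_one hα0 han0 (fun i => (ha0 i).le)
    (fun i => by linarith [(hb i).1]) (by linarith [hbn.1]) heq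
  have hΔneg : ∀ k, Δ (-k) = 1 + e0 * k + ∑ i, k * b i / a i + k * bn / an := fun k => by
    rw [hΔ, abs_of_neg he0, ceil_neg_mul_div _ _ han0,
      sum_congr rfl fun i _ => ceil_neg_mul_div _ _ (ha0 i), sum_neg_distrib]
    ring
  have hsplit := sum_Ico_neg_add_eq_sum_Icc Δ hα0.le
  simp only [hΔneg, sum_add_distrib, sum_const, Int.card_Icc, sub_zero,
    nsmul_eq_mul, mul_one, Int.toNat_of_nonneg (by omega : 0 ≤ α + 1)] at hsplit
  rw [← mul_sum, sum_comm] at hsplit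
  have hFi := two_mul_sum_sum_Icc_ediv_of_dvd ha0 hα0.le hcop hdvd
  have hFn := two_mul_sum_Icc_ediv_of_dvd_mul_add_one han0 hα0.le ⟨_, hW⟩
  rw [hW, Int.mul_ediv_cancel_left _ han0.ne'] at hFn
  have hk := two_mul_sum_Icc_zero_id hα0.le
  rw [Fintype.card_fin, Nat.cast_sub (by omega : 1 ≤ n), Nat.cast_one] at hFi
  have hΔ0 : Δ 0 = 1 := by simpa using hΔneg 0
  have h2 : 2 * ∑ j ∈ Ico (-α) 0, Δ j = 2 * -t := by
    linear_combination 2 * hsplit + e0 * hk + hFi + hFn + ht - 2 * hΔ0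
  omega

/-- χ(0) = −t, i.e. Δ(−α) + Δ(−α+1) + ⋯ + Δ(−1) = −t. -/
theorem stmt_12 (n : ℕ) (hn : 3 ≤ n) (a : Fin (n - 1) → ℤ) (an : ℤ)
    (ha : ∀ i, 2 ≤ a i) (han : 2 ≤ an)
    (hcop : ∀ i j, i ≠ j → IsCoprime (a i) (a j))
    (hcopn : ∀ i, IsCoprime (a i) an)
    (α P : ℤ) (hα : α = ∏ i, a i) (hP : P = α * an)
    (e0 : ℤ) (b : Fin (n - 1) → ℤ) (bn : ℤ)
    (hb : ∀ i, 1 ≤ b i ∧ b i < a i) (hbn : 1 ≤ bn ∧ bn < an)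
    (heq : e0 * P + (∑ i, b i * (P / a i)) + bn * α = -1)
    (Δ : ℤ → ℤ)
    (hΔ : ∀ x : ℤ, Δ x = 1 + |e0| * x -
      ((∑ i, ⌈(x * b i : ℚ) / (a i : ℚ)⌉) + ⌈(x * bn : ℚ) / (an : ℚ)⌉))
    (t : ℤ) (ht : 2 * t = ((n : ℤ) - 2) * α - (∑ i, α / a i) + 1) :
    ∑ j ∈ Finset.Ico (-α) (0 : ℤ), Δ j = -t :=
  stmt_12_general n hn a an ha han α P hα hP e0 b bn hb hbn heq Δ hΔ t ht
end

section
/- For every integer x: (1) if x ≤ (t−1)·a_n then χ(x) < 0; (2) if (t−1)·a_n < x ≤ t·a_n then χ(x) = 0; (3) if x > t·a_n then χ(x) > 0. -/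
/-!
The relation `e₀P + Σ bᵢP/aᵢ = -1` says that `α·bₙ ≡ -1 (mod aₙ)` and that every `bᵢ` is a unit
modulo `aᵢ`. The first congruence makes `Δ(x) - Δ(x - α)` equal to `1` when `aₙ ∣ x` and `0`
otherwise, so `χ(x + 1) - χ(x) = [aₙ ∣ x]` and `χ(x) = χ(0) + ⌈x / aₙ⌉`. The second gives the
symmetry `Δ(j) + Δ(-j) = 2 - n + #{i | aᵢ ∣ j}`; summed over `0 ≤ j < α` it yields
`χ(α) + χ(1) = (2 - n)α + Σ α/aᵢ + ⌈α / aₙ⌉`, whence `χ(0) = -t`.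
-/

open Finset

lemma ceil_add_one_div_sub_ceil_div {a : ℤ} (ha : 0 < a) (k : ℤ) :
    ⌈((k + 1 : ℤ) : ℚ) / a⌉ - ⌈(k : ℚ) / a⌉ = if a ∣ k then 1 else 0 := by
  have hcard := Int.Ico_filter_dvd_card k (k + 1) ha
  rw [Ico_add_one_right_eq_Icc, Icc_self, filter_singleton,
    max_eq_left (sub_nonneg.2 (Int.ceil_mono (by gcongr; simp)))] at hcard
  rw [← hcard]
  split_ifs <;> simp

lemma ceil_div_add_ceil_neg_div {a : ℤ} (ha : a ≠ 0) (k : ℤ) :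
    ⌈(k : ℚ) / a⌉ + ⌈(-k : ℚ) / a⌉ = 1 - if a ∣ k then 1 else 0 := by
  rw [neg_div, Int.ceil_neg]
  split_ifs with h
  · obtain ⟨m, rfl⟩ := h
    simp [ha]
  · rw [(Int.ceil_eq_floor_add_one_iff_notMem _).2]
    · ring
    rintro ⟨m, hm⟩
    refine h ⟨m, ?_⟩
    rw [eq_div_iff (by exact_mod_cast ha)] at hm
    exact_mod_cast (hm.symm.trans (mul_comm _ _))

lemma ceil_mul_div_add_ceil_neg_mul_div {a b : ℤ} (ha : a ≠ 0) (hab : IsCoprime a b) (x : ℤ) :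
    ⌈(x * b : ℚ) / a⌉ + ⌈((-x : ℤ) * b : ℚ) / a⌉ = 1 - if a ∣ x then 1 else 0 := by
  have h := ceil_div_add_ceil_neg_div ha (x * b)
  simp only [show a ∣ x * b ↔ a ∣ x from ⟨hab.dvd_of_dvd_mul_right, (·.mul_right b)⟩] at h
  push_cast at h ⊢
  rwa [neg_mul]

lemma ceil_sub_mul_div_of_eq_mul {a α q : ℤ} (ha : a ≠ 0) (h : α = a * q) (x b : ℤ) :
    ⌈((x - α : ℤ) * b : ℚ) / a⌉ = ⌈(x * b : ℚ) / a⌉ - b * q := by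
  rw [← Int.ceil_sub_intCast]
  congr 1
  subst h
  push_cast
  field_simp

lemma ceil_sub_mul_div_of_mul_add_one_eq {a α b M : ℤ} (ha : 0 < a) (h : α * b + 1 = a * M)
    (x : ℤ) :
    ⌈((x - α : ℤ) * b : ℚ) / a⌉ = ⌈(x * b : ℚ) / a⌉ + (if a ∣ x then 1 else 0) - M := by
  have hab : IsCoprime a b := ⟨M, -α, by linear_combination -h⟩
  have hstep := ceil_add_one_div_sub_ceil_div ha (x * b)
  simp only [show a ∣ x * b ↔ a ∣ x from ⟨hab.dvd_of_dvd_mul_right, (·.mul_right b)⟩] at hstep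
  have hQ : ((x - α : ℤ) * b : ℚ) / a = ((x * b + 1 : ℤ) : ℚ) / a - M := by
    have hM : (α * b + 1 : ℚ) = a * M := by exact_mod_cast h
    field_simp
    push_cast
    linear_combination -hM
  rw [hQ, Int.ceil_sub_intCast]
  push_cast at hstep ⊢
  linarith

lemma ceil_intCast_div_le_iff {d : ℤ} (hd : 0 < d) (x m : ℤ) : ⌈(x : ℚ) / d⌉ ≤ m ↔ x ≤ m * d := by
  rw [Int.ceil_le, div_le_iff₀ (by exact_mod_cast hd)]
  exact_mod_cast Iff.rfl

lemma ceil_intCast_div_of_eq_mul {a α q : ℤ} (ha : a ≠ 0) (h : α = a * q) :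
    ⌈(α : ℚ) / a⌉ = q := by
  subst h
  push_cast
  rw [mul_div_cancel_left₀ _ (by exact_mod_cast ha), Int.ceil_intCast]

lemma sum_Ico_zero_ite_dvd {d : ℤ} (hd : 0 < d) {α : ℤ} (hα : 0 ≤ α) :
    ∑ j ∈ Ico 0 α, (if d ∣ j then 1 else 0 : ℤ) = ⌈(α : ℚ) / d⌉ := by
  rw [sum_boole, Int.Ico_filter_dvd_card 0 α hd]
  simp only [Int.cast_zero, zero_div, Int.ceil_zero, sub_zero]
  exact max_eq_left (Int.ceil_nonneg (div_nonneg (by exact_mod_cast hα) (by exact_mod_cast hd.le)))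

lemma eq_add_ceil_div_of_sub_eq_ite {d : ℤ} (hd : 0 < d) {f : ℤ → ℤ}
    (hf : ∀ x, f (x + 1) - f x = if d ∣ x then 1 else 0) (x : ℤ) : f x = f 0 + ⌈(x : ℚ) / d⌉ := by
  induction x using Int.induction_on with
  | zero => simp
  | succ k ih =>
    have hceil := ceil_add_one_div_sub_ceil_div hd k
    linarith [hf k]
  | pred k ih =>
    have hceil := ceil_add_one_div_sub_ceil_div hd (-k - 1)
    have hfk := hf (-k - 1)
    rw [sub_add_cancel] at hceil hfk
    linarith

lemma sum_Ico_add_one_sub_sum_Ico {M : Type*} [AddCommGroup M] (f : ℤ → M) {a b : ℤ} (h : a ≤ b) :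
    ∑ j ∈ Ico (a + 1) (b + 1), f j - ∑ j ∈ Ico a b, f j = f b - f a := by
  have hleft := sum_insert (f := f) (left_notMem_Ioo (a := a) (b := b + 1))
  have hright := sum_insert (f := f) (right_notMem_Ico (a := a) (b := b))
  rw [Ioo_insert_left (by omega)] at hleft
  rw [insert_Ico_right_eq_Ico_add_one h, hleft] at hright
  rw [Ico_add_one_left_eq_Ioo, sub_eq_sub_iff_add_eq_add, add_comm, hright, add_comm]

lemma sum_Ico_one_sub {M : Type*} [AddCommMonoid M] (f : ℤ → M) (a b : ℤ) :
    ∑ j ∈ Ico (1 - b) (1 - a), f j = ∑ j ∈ Ico a b, f (-j) :=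
  sum_nbij' (fun j => -j) (fun j => -j)
    (fun j hj => by simp only [mem_Ico] at hj ⊢; omega)
    (fun j hj => by simp only [mem_Ico] at hj ⊢; omega)
    (fun j _ => neg_neg j) (fun j _ => neg_neg j) (fun j _ => by rw [neg_neg])

theorem isCoprime_of_mul_prod_add_sum_mul_prod_erase_eq_neg_one {R ι : Type*} [CommRing R]
    [Fintype ι] [DecidableEq ι] {a b : ι → R} {c : R}
    (h : c * ∏ j, a j + ∑ j, b j * ∏ k ∈ univ.erase j, a k = -1) (i : ι) :
    IsCoprime (a i) (b i) := by
  obtain ⟨w, hw⟩ : a i ∣ ∑ j ∈ univ.erase i, b j * ∏ k ∈ univ.erase j, a k :=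
    dvd_sum fun j hj => dvd_mul_of_dvd_right
      (dvd_prod_of_mem a (mem_erase.2 ⟨(ne_of_mem_erase hj).symm, mem_univ i⟩)) _
  rw [← add_sum_erase _ _ (mem_univ i), ← mul_prod_erase _ a (mem_univ i), hw] at h
  exact ⟨-(c * ∏ k ∈ univ.erase i, a k) - w, -∏ k ∈ univ.erase i, a k, by linear_combination -h⟩

section SeifertRelation

variable {ι : Type*} [Fintype ι] [DecidableEq ι] {a b : ι → ℤ} {an bn e : ℤ}

lemma neg_of_seifert_relation (ha : ∀ i, 0 < a i) (han : 0 < an) (hb : ∀ i, 0 ≤ b i)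
    (hbn : 0 ≤ bn)
    (h : e * ((∏ j, a j) * an) + ∑ i, b i * (an * ∏ j ∈ univ.erase i, a j) + bn * ∏ j, a j = -1) :
    e < 0 := by
  have hprod : ∀ s : Finset ι, 0 < ∏ j ∈ s, a j := fun s => prod_pos fun j _ => ha j
  have hsum : 0 ≤ ∑ i, b i * (an * ∏ j ∈ univ.erase i, a j) :=
    sum_nonneg fun i _ => mul_nonneg (hb i) (mul_pos han (hprod _)).le
  have hbα : 0 ≤ bn * ∏ j, a j := mul_nonneg hbn (hprod _).le
  exact neg_of_mul_neg_left (by linarith) (mul_pos (hprod _) han).le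

lemma isCoprime_of_seifert_relation
    (h : e * ((∏ j, a j) * an) + ∑ i, b i * (an * ∏ j ∈ univ.erase i, a j) + bn * ∏ j, a j = -1)
    (i : ι) : IsCoprime (a i) (b i) := by
  refine (isCoprime_of_mul_prod_add_sum_mul_prod_erase_eq_neg_one (c := e * an + bn)
    (b := fun i => b i * an) ?_ i).of_mul_right_left
  rw [← h]
  simp only [mul_assoc]
  ring

lemma mul_add_one_eq_of_seifert_relation
    (h : e * ((∏ j, a j) * an) + ∑ i, b i * (an * ∏ j ∈ univ.erase i, a j) + bn * ∏ j, a j = -1) :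
    (∏ j, a j) * bn + 1 = an * -(e * ∏ j, a j + ∑ i, b i * ∏ j ∈ univ.erase i, a j) := by
  have hs : ∑ i, b i * (an * ∏ j ∈ univ.erase i, a j) =
      an * ∑ i, b i * ∏ j ∈ univ.erase i, a j := by
    simp only [mul_sum, mul_left_comm]
  linear_combination h - hs

end SeifertRelation

section SeifertDelta

variable {ι : Type*} [Fintype ι] (e : ℤ) (a b : ι → ℤ) (an bn : ℤ)

def seifertDelta (x : ℤ) : ℤ :=
  1 + |e| * x - ((∑ i, ⌈(x * b i : ℚ) / (a i : ℚ)⌉) + ⌈(x * bn : ℚ) / (an : ℚ)⌉)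

noncomputable def seifertChi (x : ℤ) : ℤ :=
  ∑ j ∈ Ico (x - ∏ i, a i) x, seifertDelta e a b an bn j

variable {e a b an bn}

lemma seifertDelta_sub_seifertDelta_sub {α : ℤ} {q : ι → ℤ} (ha : ∀ i, a i ≠ 0)
    (hαq : ∀ i, α = a i * q i) (han : 0 < an) (he : e ≤ 0)
    (hM : α * bn + 1 = an * -(e * α + ∑ i, b i * q i)) (x : ℤ) :
    seifertDelta e a b an bn x - seifertDelta e a b an bn (x - α) = if an ∣ x then 1 else 0 := by
  have hdvd (i : ι) := ceil_sub_mul_div_of_eq_mul (ha i) (hαq i) x (b i)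
  have hlast := ceil_sub_mul_div_of_mul_add_one_eq han hM x
  simp only [seifertDelta, hdvd, hlast, sum_sub_distrib, abs_of_nonpos he]
  ring

lemma seifertDelta_add_seifertDelta_neg (ha : ∀ i, a i ≠ 0) (hab : ∀ i, IsCoprime (a i) (b i))
    (han : an ≠ 0) (hanb : IsCoprime an bn) (x : ℤ) :
    seifertDelta e a b an bn x + seifertDelta e a b an bn (-x) =
      1 - Fintype.card ι + ∑ i, (if a i ∣ x then 1 else 0) + if an ∣ x then 1 else 0 := by
  have hpair (i : ι) := ceil_mul_div_add_ceil_neg_mul_div (ha i) (hab i) x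
  have hlast := ceil_mul_div_add_ceil_neg_mul_div han hanb x
  have hsum : ∑ i, ⌈(x * b i : ℚ) / a i⌉ + ∑ i, ⌈((-x : ℤ) * b i : ℚ) / a i⌉ =
      Fintype.card ι - ∑ i, (if a i ∣ x then 1 else 0) := by
    rw [← sum_add_distrib, sum_congr rfl fun i _ => hpair i, sum_sub_distrib]
    simp
  simp only [seifertDelta]
  split_ifs at hlast ⊢ <;> linarith

end SeifertDelta

section SeifertChi

variable {ι : Type*} [Fintype ι] [DecidableEq ι] {a b : ι → ℤ} {an bn e : ℤ}

lemma seifertChi_add_one_sub (ha : ∀ i, 0 < a i) (han : 0 < an) (he : e ≤ 0)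
    (hM : (∏ j, a j) * bn + 1 = an * -(e * ∏ j, a j + ∑ i, b i * ∏ j ∈ univ.erase i, a j))
    (x : ℤ) :
    seifertChi e a b an bn (x + 1) - seifertChi e a b an bn x = if an ∣ x then 1 else 0 := by
  rw [seifertChi, seifertChi, add_sub_right_comm,
    sum_Ico_add_one_sub_sum_Ico _ (sub_le_self _ (prod_pos fun i _ => ha i).le)]
  exact seifertDelta_sub_seifertDelta_sub (fun i => (ha i).ne')
    (fun i => (mul_prod_erase _ a (mem_univ i)).symm) han he hM x

lemma seifertChi_zero (ha : ∀ i, 0 < a i) (han : 0 < an) (he : e ≤ 0)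
    (hM : (∏ j, a j) * bn + 1 = an * -(e * ∏ j, a j + ∑ i, b i * ∏ j ∈ univ.erase i, a j))
    (hab : ∀ i, IsCoprime (a i) (b i)) :
    2 * seifertChi e a b an bn 0 + 1 =
      (1 - Fintype.card ι) * ∏ j, a j + ∑ i, ∏ j ∈ univ.erase i, a j := by
  set α := ∏ j, a j
  have hα : 0 ≤ α := (prod_pos fun i _ => ha i).le
  have hanb : IsCoprime an bn :=
    ⟨-(e * α + ∑ i, b i * ∏ j ∈ univ.erase i, a j), -α, by linear_combination -hM⟩
  have hstep := seifertChi_add_one_sub ha han he hM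
  have hχα := eq_add_ceil_div_of_sub_eq_ite han hstep α
  have hχ1 : seifertChi e a b an bn 1 - seifertChi e a b an bn 0 = 1 := by
    simpa using hstep 0
  have hsym : seifertChi e a b an bn α + seifertChi e a b an bn 1 =
      ∑ j ∈ Ico 0 α, (seifertDelta e a b an bn j + seifertDelta e a b an bn (-j)) := by
    rw [sum_add_distrib, seifertChi, seifertChi, sub_self, ← sum_Ico_one_sub, sub_zero]
  have hcount (i : ι) :
      ∑ j ∈ Ico 0 α, (if a i ∣ j then 1 else 0 : ℤ) = ∏ j ∈ univ.erase i, a j := by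
    rw [sum_Ico_zero_ite_dvd (ha i) hα, ceil_intCast_div_of_eq_mul (ha i).ne'
      (mul_prod_erase _ a (mem_univ i)).symm]
  simp only [sum_congr rfl fun j _ => seifertDelta_add_seifertDelta_neg (fun i => (ha i).ne') hab
    han.ne' hanb j, sum_add_distrib, sum_const, Int.card_Ico, sub_zero, Int.toNat_of_nonneg hα,
    nsmul_eq_mul] at hsym
  rw [sum_comm, sum_congr rfl fun i _ => hcount i, sum_Ico_zero_ite_dvd han hα] at hsym
  linarith

lemma seifertChi_eq_ceil_div_sub (ha : ∀ i, 0 < a i) (han : 0 < an) (hb : ∀ i, 0 ≤ b i)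
    (hbn : 0 ≤ bn)
    (h : e * ((∏ j, a j) * an) + ∑ i, b i * (an * ∏ j ∈ univ.erase i, a j) + bn * ∏ j, a j = -1)
    {t : ℤ}
    (ht : 2 * t = (Fintype.card ι - 1) * ∏ j, a j - ∑ i, ∏ j ∈ univ.erase i, a j + 1) (x : ℤ) :
    seifertChi e a b an bn x = ⌈(x : ℚ) / an⌉ - t := by
  have he := (neg_of_seifert_relation ha han hb hbn h).le
  have hM := mul_add_one_eq_of_seifert_relation h
  have hχ0 := seifertChi_zero ha han he hM (isCoprime_of_seifert_relation h)
  rw [eq_add_ceil_div_of_sub_eq_ite han (seifertChi_add_one_sub ha han he hM) x]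
  linarith

end SeifertChi

theorem stmt_13_general (n : ℕ) (hn : 3 ≤ n) (a : Fin (n - 1) → ℤ) (an : ℤ)
    (ha : ∀ i, 2 ≤ a i) (han : 2 ≤ an)
    (α P : ℤ) (hα : α = ∏ i, a i) (hP : P = α * an)
    (e0 : ℤ) (b : Fin (n - 1) → ℤ) (bn : ℤ)
    (hb : ∀ i, 1 ≤ b i ∧ b i < a i) (hbn : 1 ≤ bn ∧ bn < an)
    (heq : e0 * P + (∑ i, b i * (P / a i)) + bn * α = -1)
    (Δ : ℤ → ℤ)
    (hΔ : ∀ x : ℤ, Δ x = 1 + |e0| * x -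
      ((∑ i, ⌈(x * b i : ℚ) / (a i : ℚ)⌉) + ⌈(x * bn : ℚ) / (an : ℚ)⌉))
    (χ : ℤ → ℤ) (hχ : ∀ x : ℤ, χ x = ∑ j ∈ Finset.Ico (x - α) x, Δ j)
    (t : ℤ) (ht : 2 * t = ((n : ℤ) - 2) * α - (∑ i, α / a i) + 1) :
    ∀ x : ℤ,
      (x ≤ (t - 1) * an → χ x < 0) ∧
      ((t - 1) * an < x → x ≤ t * an → χ x = 0) ∧
      (t * an < x → 0 < χ x) := by
  have hapos (i : Fin (n - 1)) : 0 < a i := by linarith [ha i]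
  have hanpos : 0 < an := by omega
  subst hα hP
  obtain rfl : Δ = seifertDelta e0 a b an bn := funext hΔ
  obtain rfl : χ = seifertChi e0 a b an bn := funext hχ
  have hquot (i : Fin (n - 1)) : (∏ j, a j) / a i = ∏ j ∈ univ.erase i, a j := by
    rw [← mul_prod_erase _ a (mem_univ i), Int.mul_ediv_cancel_left _ (hapos i).ne']
  have hquot' (i : Fin (n - 1)) : (∏ j, a j) * an / a i = an * ∏ j ∈ univ.erase i, a j := by
    rw [mul_comm, Int.mul_ediv_assoc _ (dvd_prod_of_mem a (mem_univ i)), hquot]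
  simp only [hquot, hquot'] at heq ht
  have hcard : ((n : ℤ) - 2) = Fintype.card (Fin (n - 1)) - 1 := by
    simp only [Fintype.card_fin]
    omega
  rw [hcard] at ht
  intro x
  have hχ :=
    seifertChi_eq_ceil_div_sub hapos hanpos (fun i => by linarith [hb i]) (by omega) heq ht x
  have h₁ := ceil_intCast_div_le_iff hanpos x (t - 1)
  have h₂ := ceil_intCast_div_le_iff hanpos x t
  omega

/-- (1) if x ≤ (t−1)·a_n then χ(x) < 0; (2) if (t−1)·a_n < x ≤ t·a_n then χ(x) = 0; (3) if x > t·a_n then χ(x) > 0. -/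
theorem stmt_13 (n : ℕ) (hn : 3 ≤ n) (a : Fin (n - 1) → ℤ) (an : ℤ)
    (ha : ∀ i, 2 ≤ a i) (han : 2 ≤ an)
    (hcop : ∀ i j, i ≠ j → IsCoprime (a i) (a j))
    (hcopn : ∀ i, IsCoprime (a i) an)
    (α P : ℤ) (hα : α = ∏ i, a i) (hP : P = α * an)
    (e0 : ℤ) (b : Fin (n - 1) → ℤ) (bn : ℤ)
    (hb : ∀ i, 1 ≤ b i ∧ b i < a i) (hbn : 1 ≤ bn ∧ bn < an)
    (heq : e0 * P + (∑ i, b i * (P / a i)) + bn * α = -1)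
    (Δ : ℤ → ℤ)
    (hΔ : ∀ x : ℤ, Δ x = 1 + |e0| * x -
      ((∑ i, ⌈(x * b i : ℚ) / (a i : ℚ)⌉) + ⌈(x * bn : ℚ) / (an : ℚ)⌉))
    (χ : ℤ → ℤ) (hχ : ∀ x : ℤ, χ x = ∑ j ∈ Finset.Ico (x - α) x, Δ j)
    (t : ℤ) (ht : 2 * t = ((n : ℤ) - 2) * α - (∑ i, α / a i) + 1) :
    ∀ x : ℤ,
      (x ≤ (t - 1) * an → χ x < 0) ∧
      ((t - 1) * an < x → x ≤ t * an → χ x = 0) ∧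
      (t * an < x → 0 < χ x) :=
  stmt_13_general n hn a an ha han α P hα hP e0 b bn hb hbn heq Δ hΔ χ hχ t ht
end
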